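/- Let X and Y be Banach spaces where Y has the Schur property, and let M be a closed subspace of L(X,Y) such that for each y* ∈ Y* the evaluation operator ψ_{y*} : M → X*, T ↦ T*(y*), is Dunford-Pettis p-convergent. Then M has the p-Dunford-Pettis relatively compact property. -/

import Mathlib

open Filter Topology Set
open scoped ENNReal

noncomputable section

/-- A sequence in a normed space is weakly null. -/
def WeaklyNull {E : Type*} [NormedAddCommGroup E] [NormedSpace ℝ E] (x : ℕ → E) : Prop :=
  ∀ φ : E →L[ℝ] ℝ, Tendsto (fun n => φ (x n)) atTop (𝓝 0)

/-- A bounded set on which every weakly null sequence of functionals converges uniformly. -/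
def DunfordPettisSet {E : Type*} [NormedAddCommGroup E] [NormedSpace ℝ E] (K : Set E) : Prop :=
  Bornology.IsBounded K ∧ ∀ f : ℕ → (E →L[ℝ] ℝ), WeaklyNull f →
    ∀ ε > 0, ∃ N : ℕ, ∀ n ≥ N, ∀ x ∈ K, |f n x| < ε

/-- Weakly `p`-summable sequence; for `p = ∞` this means weakly null. -/
def WeaklyPSummable (p : ℝ≥0∞) {E : Type*} [NormedAddCommGroup E] [NormedSpace ℝ E]
    (x : ℕ → E) : Prop :=
  if p = ∞ then WeaklyNull x else ∀ φ : E →L[ℝ] ℝ, Memℓp (fun n => φ (x n)) p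

def NormNull {E : Type*} [NormedAddCommGroup E] (x : ℕ → E) : Prop :=
  Tendsto (fun n => ‖x n‖) atTop (𝓝 0)

def PRightNull (p : ℝ≥0∞) {E : Type*} [NormedAddCommGroup E] [NormedSpace ℝ E]
    (x : ℕ → E) : Prop :=
  WeaklyPSummable p x ∧ DunfordPettisSet (Set.range x)

def WeaklyPCauchy (p : ℝ≥0∞) {E : Type*} [NormedAddCommGroup E] [NormedSpace ℝ E]
    (x : ℕ → E) : Prop :=
  ∀ k l : ℕ → ℕ, StrictMono k → StrictMono l →
    WeaklyPSummable p (fun n => x (k n) - x (l n))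

def PRightCauchy (p : ℝ≥0∞) {E : Type*} [NormedAddCommGroup E] [NormedSpace ℝ E]
    (x : ℕ → E) : Prop :=
  WeaklyPCauchy p x ∧ DunfordPettisSet (Set.range x)

/-- `p`-Dunford-Pettis relatively compact property. -/
def HasDPrcP (p : ℝ≥0∞) (E : Type*) [NormedAddCommGroup E] [NormedSpace ℝ E] : Prop :=
  ∀ x : ℕ → E, PRightNull p x → NormNull x

/-- A (not necessarily linear) map is Dunford-Pettis `p`-convergent. -/
def DPpConvergent (p : ℝ≥0∞) {E F : Type*} [NormedAddCommGroup E] [NormedSpace ℝ E]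
    [NormedAddCommGroup F] (f : E → F) : Prop :=
  ∀ x : ℕ → E, PRightNull p x → NormNull (fun n => f (x n))

/-- A map is `p`-convergent. -/
def PConvergent (p : ℝ≥0∞) {E F : Type*} [NormedAddCommGroup E] [NormedSpace ℝ E]
    [NormedAddCommGroup F] (f : E → F) : Prop :=
  ∀ x : ℕ → E, WeaklyPSummable p x → NormNull (fun n => f (x n))

/-- The adjoint of a continuous linear operator between normed spaces. -/
def opAdjoint {E F : Type*} [NormedAddCommGroup E] [NormedSpace ℝ E]
    [NormedAddCommGroup F] [NormedSpace ℝ F] (T : E →L[ℝ] F) :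
    (F →L[ℝ] ℝ) →L[ℝ] (E →L[ℝ] ℝ) :=
  (ContinuousLinearMap.compL ℝ E F ℝ).flip T


/-- The Schur property: every weakly null sequence is norm null. -/
def SchurProperty (E : Type*) [NormedAddCommGroup E] [NormedSpace ℝ E] : Prop :=
  ∀ x : ℕ → E, WeaklyNull x → NormNull x

section

variable {X Y : Type*} [NormedAddCommGroup X] [NormedSpace ℝ X]
  [NormedAddCommGroup Y] [NormedSpace ℝ Y]

theorem ContinuousLinearMap.exists_norm_le_one_opNorm_le_norm_apply_add
    (T : X →L[ℝ] Y) {ε : ℝ} (hε : 0 < ε) : ∃ x : X, ‖x‖ ≤ 1 ∧ ‖T‖ ≤ ‖T x‖ + ε := by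
  by_cases hsmall : ‖T‖ ≤ ε
  · exact ⟨0, by simp, by simpa using hsmall⟩
  · obtain ⟨x, hx, hlt⟩ := T.exists_lt_apply_of_lt_opNorm (sub_lt_self ‖T‖ hε)
    exact ⟨x, hx.le, by linarith⟩

theorem weaklyNull_apply_of_forall_normNull_opAdjoint {T : ℕ → X →L[ℝ] Y} {x : ℕ → X}
    (hT : ∀ g : Y →L[ℝ] ℝ, NormNull (fun n => opAdjoint (T n) g)) (hx : ∀ n, ‖x n‖ ≤ 1) :
    WeaklyNull (fun n => T n (x n)) := by
  intro g
  have hbound : ∀ n, ‖g (T n (x n))‖ ≤ ‖opAdjoint (T n) g‖ := fun n =>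
    calc ‖g (T n (x n))‖ = ‖opAdjoint (T n) g (x n)‖ := rfl
      _ ≤ ‖opAdjoint (T n) g‖ * ‖x n‖ := (opAdjoint (T n) g).le_opNorm _
      _ ≤ ‖opAdjoint (T n) g‖ := mul_le_of_le_one_right (norm_nonneg _) (hx n)
  exact tendsto_zero_iff_norm_tendsto_zero.mpr
    (squeeze_zero (fun _ => norm_nonneg _) hbound (hT g))

/-- Test each `T n` on an almost norming unit vector `x n`: the values `T n (x n)` are weakly
null, hence norm null by the Schur property, and they control `‖T n‖` up to `1 / (n + 1)`. -/
theorem SchurProperty.normNull_of_forall_normNull_opAdjoint (hY : SchurProperty Y)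
    {T : ℕ → X →L[ℝ] Y} (hT : ∀ g : Y →L[ℝ] ℝ, NormNull (fun n => opAdjoint (T n) g)) :
    NormNull T := by
  choose x hx hnorming using fun n : ℕ =>
    (T n).exists_norm_le_one_opNorm_le_norm_apply_add Nat.one_div_pos_of_nat
  have hvalues : NormNull (fun n => T n (x n)) :=
    hY _ (weaklyNull_apply_of_forall_normNull_opAdjoint hT hx)
  have hupper : Tendsto (fun n : ℕ => ‖T n (x n)‖ + 1 / ((n : ℝ) + 1)) atTop (𝓝 0) := by
    simpa using hvalues.add tendsto_one_div_add_atTop_nhds_zero_nat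
  exact squeeze_zero (fun _ => norm_nonneg _) hnorming hupper

end

theorem stmt13_general {X Y : Type*} [NormedAddCommGroup X] [NormedSpace ℝ X]
    [NormedAddCommGroup Y] [NormedSpace ℝ Y]
    (p : ℝ≥0∞) (hY : SchurProperty Y)
    (M : Submodule ℝ (X →L[ℝ] Y))
    (hev : ∀ g : Y →L[ℝ] ℝ, DPpConvergent p (fun T : M => opAdjoint (T : X →L[ℝ] Y) g)) :
    HasDPrcP p M := fun T hT =>
  hY.normNull_of_forall_normNull_opAdjoint (T := fun n => (T n : X →L[ℝ] Y)) fun g => hev g T hT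

theorem stmt13 {X Y : Type*} [NormedAddCommGroup X] [NormedSpace ℝ X] [CompleteSpace X]
    [NormedAddCommGroup Y] [NormedSpace ℝ Y] [CompleteSpace Y]
    (p : ℝ≥0∞) (hp : 1 ≤ p) (hY : SchurProperty Y)
    (M : Submodule ℝ (X →L[ℝ] Y)) (hM : IsClosed (M : Set (X →L[ℝ] Y)))
    (hev : ∀ g : Y →L[ℝ] ℝ, DPpConvergent p (fun T : M => opAdjoint (T : X →L[ℝ] Y) g)) :
    HasDPrcP p M :=
  stmt13_general p hY M hev
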